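/- Let 𝔞 > -1 and define W_j(x) = L_j^{2𝔞}(x) - ((j+2𝔞)/j) L_{j-1}^{2𝔞}(x) and G_j(x) = (d/dx){L_{j+1}^{2𝔞}(x) - ((j+2𝔞)/j) L_{j-1}^{2𝔞}(x)} for j ∈ ℕ. Then for every z ≥ 0 and j ∈ ℕ: ∫_0^z e^{-x/2} x^{𝔞} G_j(x) dx = 2 e^{-z/2} z^{𝔞} W_j(z). -/

import Mathlib

open Filter Real MeasureTheory

/-- Generalized binomial coefficient `C(x, m) = x(x-1)⋯(x-m+1)/m!` for `m ∈ ℕ₀`, `0` for `m < 0`. -/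
noncomputable def gchoose (x : ℝ) (m : ℤ) : ℝ :=
  if 0 ≤ m then (∏ i ∈ Finset.range m.toNat, (x - (i : ℝ))) / (Nat.factorial m.toNat : ℝ) else 0

/-- Generalized Laguerre polynomial `L_j^α(x) = Σ_{ℓ=0}^j ((-1)^ℓ/ℓ!) C(j+α, j-ℓ) x^ℓ`. -/
noncomputable def lagL (j : ℕ) (α : ℝ) : ℝ → ℝ :=
  fun x => ∑ l ∈ Finset.range (j + 1),
    ((-1 : ℝ) ^ l / (Nat.factorial l : ℝ)) * gchoose ((j : ℝ) + α) ((j : ℤ) - l) * x ^ l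

/-! Write `α = 2𝔞`, `j = n + 1` and `P = -L_n^{α+1} / (n + 1)`. The classical identities
`x L_n^{α+1} = (n+α+1) L_n^α - (n+1) L_{n+1}^α`, `(L_{n+1}^α)' = -L_n^{α+1}`,
`L_{n+1}^α - L_n^α = L_{n+1}^{α-1}` and `(n+1) L_{n+1}^α = (α+1-x) L_n^{α+1} + x (L_n^{α+1})'`,
each a one-line identity between generalized binomial coefficients, give `W_j = x P` and
`G_j = (α+2-x) P + 2x P'`. So `e^{-x/2} x^𝔞 G_j(x)` is the derivative of `2 e^{-x/2} x^{𝔞+1} P(x)`,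
which vanishes at `0` since `𝔞 + 1 > 0`. -/

open Finset Polynomial

theorem gchoose_of_neg (x : ℝ) {m : ℤ} (hm : m < 0) : gchoose x m = 0 := by
  simp [gchoose, not_le.mpr hm]

theorem gchoose_natCast (x : ℝ) (k : ℕ) :
    gchoose x k = (∏ i ∈ range k, (x - i)) / k.factorial := by
  simp [gchoose]

theorem intCast_mul_gchoose_of_nonpos (x : ℝ) {m : ℤ} (hm : m ≤ 0) :
    (m : ℝ) * gchoose x m = 0 := by
  rcases hm.lt_or_eq with hm | rfl
  · rw [gchoose_of_neg x hm, mul_zero]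
  · simp

theorem intCast_mul_gchoose (x : ℝ) (m : ℤ) :
    (m : ℝ) * gchoose x m = (x - m + 1) * gchoose x (m - 1) := by
  rcases le_or_gt m 0 with hm | hm
  · rw [intCast_mul_gchoose_of_nonpos x hm, gchoose_of_neg x (by omega), mul_zero]
  obtain ⟨k, rfl⟩ := Int.eq_succ_of_zero_lt hm
  rw [add_sub_cancel_right, ← Nat.cast_succ, gchoose_natCast, gchoose_natCast,
    prod_range_succ, Nat.factorial_succ]
  push_cast
  field_simp
  ring

theorem intCast_mul_gchoose_eq_mul_gchoose_sub_one (x : ℝ) (m : ℤ) :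
    (m : ℝ) * gchoose x m = x * gchoose (x - 1) (m - 1) := by
  rcases le_or_gt m 0 with hm | hm
  · rw [intCast_mul_gchoose_of_nonpos x hm, gchoose_of_neg _ (by omega), mul_zero]
  obtain ⟨k, rfl⟩ := Int.eq_succ_of_zero_lt hm
  rw [add_sub_cancel_right, ← Nat.cast_succ, gchoose_natCast, gchoose_natCast,
    prod_range_succ', Nat.factorial_succ]
  push_cast
  field_simp
  simp_rw [sub_sub, add_comm (1 : ℝ)]
  ring

theorem gchoose_succ_succ (x : ℝ) (m : ℤ) :
    gchoose (x + 1) (m + 1) = gchoose x m + gchoose x (m + 1) := by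
  rcases lt_trichotomy (m + 1) 0 with hm | hm | hm
  · rw [gchoose_of_neg _ hm, gchoose_of_neg _ hm, gchoose_of_neg _ (by omega), zero_add]
  · rw [hm, gchoose_of_neg _ (by omega : m < 0)]
    simp [gchoose]
  · have hm' : ((m + 1 : ℤ) : ℝ) ≠ 0 := by exact_mod_cast hm.ne'
    apply mul_left_cancel₀ hm'
    rw [mul_add, intCast_mul_gchoose_eq_mul_gchoose_sub_one, intCast_mul_gchoose x (m + 1)]
    simp only [add_sub_cancel_right]
    push_cast
    ring

section LaguerrePolynomial

variable (n : ℕ) (α : ℝ)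

noncomputable def lagPoly : ℝ[X] :=
  ∑ l ∈ range (n + 1), C ((-1) ^ l / l.factorial * gchoose (n + α) (n - l)) * X ^ l

theorem eval_lagPoly (x : ℝ) : (lagPoly n α).eval x = lagL n α x := by
  simp [lagPoly, lagL, eval_finsetSum]

theorem coeff_lagPoly (l : ℕ) :
    (lagPoly n α).coeff l = (-1) ^ l / l.factorial * gchoose (n + α) (n - l) := by
  simp only [lagPoly, finsetSum_coeff, coeff_C_mul_X_pow, sum_ite_eq, mem_range]
  split_ifs with hl
  · rfl
  · rw [gchoose_of_neg _ (by omega), mul_zero]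

theorem coeff_lagPoly_succ (l : ℕ) :
    (lagPoly n α).coeff (l + 1)
      = -((-1) ^ l / ((l + 1) * l.factorial) * gchoose (n + α) (n - l - 1)) := by
  rw [coeff_lagPoly, Nat.factorial_succ, pow_succ]
  push_cast
  rw [sub_add_eq_sub_sub]
  ring

theorem coeff_lagPoly_succ_succ (l : ℕ) :
    (lagPoly (n + 1) α).coeff (l + 1)
      = -((-1) ^ l / ((l + 1) * l.factorial) * gchoose (n + α + 1) (n - l)) := by
  rw [coeff_lagPoly_succ]
  push_cast
  rw [show (n : ℤ) + 1 - l - 1 = n - l by ring, add_right_comm]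

theorem derivative_lagPoly_succ : derivative (lagPoly (n + 1) α) = -lagPoly n (α + 1) := by
  ext l
  rw [coeff_derivative, coeff_lagPoly_succ_succ, coeff_neg, coeff_lagPoly, ← add_assoc]
  field_simp

theorem lagPoly_succ_sub_lagPoly : lagPoly (n + 1) α - lagPoly n α = lagPoly (n + 1) (α - 1) := by
  ext l
  have h := gchoose_succ_succ (n + α) (n - l)
  rw [coeff_sub, coeff_lagPoly, coeff_lagPoly, coeff_lagPoly]
  push_cast
  rw [show (n : ℝ) + 1 + (α - 1) = n + α by ring, show (n : ℤ) + 1 - l = n - l + 1 by ring,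
    show (n : ℝ) + 1 + α = n + α + 1 by ring, h]
  ring

theorem X_mul_lagPoly_add_one :
    X * lagPoly n (α + 1) = C (n + 1 + α) * lagPoly n α - C (n + 1 : ℝ) * lagPoly (n + 1) α := by
  ext (_ | l)
  · have h := intCast_mul_gchoose_eq_mul_gchoose_sub_one (n + 1 + α) (n + 1)
    simp only [coeff_X_mul_zero, coeff_sub, coeff_C_mul, coeff_lagPoly]
    push_cast at h ⊢
    rw [add_sub_cancel_right, show (n : ℝ) + 1 + α - 1 = n + α by ring] at h
    simp only [pow_zero, Nat.factorial_zero, Nat.cast_one, div_one, one_mul, sub_zero]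
    linear_combination h
  · have h := intCast_mul_gchoose_eq_mul_gchoose_sub_one (n + α + 1) (n - l)
    simp only [coeff_X_mul, coeff_sub, coeff_C_mul, coeff_lagPoly_succ_succ, coeff_lagPoly_succ,
      coeff_lagPoly]
    push_cast at h ⊢
    rw [show (n : ℝ) + α + 1 - 1 = n + α by ring] at h
    rw [show (n : ℝ) + (α + 1) = n + α + 1 by ring]
    field_simp
    linear_combination -h

theorem C_succ_mul_lagPoly_succ :
    C (n + 1 : ℝ) * lagPoly (n + 1) α
      = (C (α + 1) - X) * lagPoly n (α + 1) + X * derivative (lagPoly n (α + 1)) := by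
  rw [sub_mul]
  ext (_ | l)
  · have h := intCast_mul_gchoose (n + 1 + α) (n + 1)
    simp only [coeff_add, coeff_sub, coeff_C_mul, coeff_X_mul_zero, coeff_lagPoly]
    push_cast at h ⊢
    simp only [pow_zero, Nat.factorial_zero, Nat.cast_one, div_one, one_mul, sub_zero,
      add_zero]
    rw [add_sub_cancel_right] at h
    rw [show (n : ℝ) + (α + 1) = n + 1 + α by ring]
    linear_combination h
  · have h := intCast_mul_gchoose (n + α + 1) (n - l)
    simp only [coeff_add, coeff_sub, coeff_C_mul, coeff_X_mul, coeff_derivative,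
      coeff_lagPoly_succ_succ, coeff_lagPoly_succ, coeff_lagPoly]
    push_cast at h ⊢
    rw [show (n : ℝ) + (α + 1) = n + α + 1 by ring]
    field_simp
    linear_combination -h

theorem C_succ_mul_lagPoly_succ_sub_C_mul_lagPoly :
    C (n + 1 : ℝ) * (lagPoly (n + 1) α - C ((n + 1 + α) / (n + 1)) * lagPoly n α)
      = -(X * lagPoly n (α + 1)) := by
  rw [X_mul_lagPoly_add_one, mul_sub, ← mul_assoc, ← C_mul, mul_div_cancel₀ _ (by positivity)]
  ring

theorem C_succ_mul_derivative_lagPoly_add_two_sub_C_mul_lagPoly :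
    C (n + 1 : ℝ) * derivative (lagPoly (n + 2) α - C ((n + 1 + α) / (n + 1)) * lagPoly n α)
      = -((C (α + 2) - X) * lagPoly n (α + 1) + 2 * X * derivative (lagPoly n (α + 1))) := by
  have hstep : derivative (lagPoly (n + 2) α) - derivative (lagPoly (n + 1) α)
      = -lagPoly (n + 1) α := by
    rw [← derivative_sub, lagPoly_succ_sub_lagPoly, derivative_lagPoly_succ, sub_add_cancel]
  have hW := congrArg derivative (C_succ_mul_lagPoly_succ_sub_C_mul_lagPoly n α)
  simp only [derivative_mul, derivative_sub, derivative_neg, derivative_C, derivative_X,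
    zero_mul, zero_add, one_mul] at hW
  have hC : (C (α + 2) : ℝ[X]) = C (α + 1) + 1 := by rw [← C_1, ← C_add]; ring_nf
  rw [derivative_sub, derivative_C_mul, hC]
  linear_combination C (n + 1 : ℝ) * hstep + hW - C_succ_mul_lagPoly_succ n α

noncomputable def lagWDivX : ℝ[X] := C (-((n : ℝ) + 1)⁻¹) * lagPoly n (α + 1)

theorem lagL_succ_sub_div_mul_lagL (x : ℝ) :
    lagL (n + 1) α x - (n + 1 + α) / (n + 1) * lagL n α x = x * (lagWDivX n α).eval x := by
  have hn : (n : ℝ) + 1 ≠ 0 := n.cast_add_one_ne_zero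
  have h := congrArg (eval x) (C_succ_mul_lagPoly_succ_sub_C_mul_lagPoly n α)
  simp only [eval_mul, eval_sub, eval_C, eval_neg, eval_X, eval_lagPoly] at h
  simp only [lagWDivX, eval_mul, eval_C, eval_lagPoly]
  field_simp at h ⊢
  linear_combination h

theorem deriv_lagL_add_two_sub_div_mul_lagL (x : ℝ) :
    deriv (fun y => lagL (n + 1 + 1) α y - (n + 1 + α) / (n + 1) * lagL n α y) x
      = (α + 2 - x) * (lagWDivX n α).eval x + 2 * x * (derivative (lagWDivX n α)).eval x := by
  have hpoly : (fun y => lagL (n + 1 + 1) α y - (n + 1 + α) / (n + 1) * lagL n α y)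
      = fun y => (lagPoly (n + 2) α - C ((n + 1 + α) / (n + 1)) * lagPoly n α).eval y := by
    ext y
    simp only [eval_sub, eval_mul, eval_C, eval_lagPoly]
  have hn : (n : ℝ) + 1 ≠ 0 := n.cast_add_one_ne_zero
  have h := congrArg (eval x) (C_succ_mul_derivative_lagPoly_add_two_sub_C_mul_lagPoly n α)
  rw [hpoly, Polynomial.deriv]
  simp only [lagWDivX, derivative_C_mul, eval_mul, eval_sub, eval_add, eval_C, eval_neg, eval_X,
    eval_ofNat, eval_lagPoly] at h ⊢
  field_simp at h ⊢
  linear_combination h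

end LaguerrePolynomial

theorem integral_exp_neg_half_mul_rpow_mul {a z : ℝ} (ha : -1 < a) (hz : 0 ≤ z) {f f' : ℝ → ℝ}
    (hf : ∀ x, HasDerivAt f (f' x) x) (hf' : Continuous f') :
    ∫ x in (0 : ℝ)..z, exp (-x / 2) * x ^ a * ((2 * a + 2 - x) * f x + 2 * x * f' x)
      = 2 * exp (-z / 2) * z ^ (a + 1) * f z := by
  have hfc : Continuous f := continuous_iff_continuousAt.2 fun x => (hf x).continuousAt
  have hcont : Continuous fun x => 2 * exp (-x / 2) * x ^ (a + 1) * f x := by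
    have := continuous_rpow_const (q := a + 1) (by linarith)
    fun_prop
  have hderiv : ∀ x ∈ Set.Ioo 0 z, HasDerivAt (fun x => 2 * exp (-x / 2) * x ^ (a + 1) * f x)
      (exp (-x / 2) * x ^ a * ((2 * a + 2 - x) * f x + 2 * x * f' x)) x := by
    intro x hx
    have hx0 : x ≠ 0 := hx.1.ne'
    refine ((((hasDerivAt_id x).neg.div_const 2).exp.const_mul 2).mul
      (hasDerivAt_rpow_const (p := a + 1) (Or.inl hx0))).mul (hf x) |>.congr_deriv ?_
    simp only [Pi.mul_apply, Pi.neg_apply, id_eq, add_sub_cancel_right, rpow_add_one hx0]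
    ring
  have hint : IntervalIntegrable
      (fun x => exp (-x / 2) * x ^ a * ((2 * a + 2 - x) * f x + 2 * x * f' x)) volume 0 z :=
    ((intervalIntegral.intervalIntegrable_rpow' ha).continuousOn_mul (by fun_prop)).mul_continuousOn
      (by fun_prop)
  rw [intervalIntegral.integral_eq_sub_of_hasDerivAt_of_le hz hcont.continuousOn hderiv hint]
  simp [zero_rpow (by linarith : a + 1 ≠ 0)]

theorem G_integral_formula (a : ℝ) (ha : -1 < a) (j : ℕ) (hj : 1 ≤ j) (z : ℝ) (hz : 0 ≤ z) :
    ∫ x in (0 : ℝ)..z, Real.exp (-x / 2) * x ^ a *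
        deriv (fun y : ℝ =>
          lagL (j + 1) (2 * a) y - (((j : ℝ) + 2 * a) / (j : ℝ)) * lagL (j - 1) (2 * a) y) x
      = 2 * Real.exp (-z / 2) * z ^ a *
          (lagL j (2 * a) z - (((j : ℝ) + 2 * a) / (j : ℝ)) * lagL (j - 1) (2 * a) z) := by
  obtain ⟨n, rfl⟩ : ∃ n, j = n + 1 := ⟨j - 1, by omega⟩
  rw [Nat.add_sub_cancel]
  push_cast
  simp only [deriv_lagL_add_two_sub_div_mul_lagL]
  rw [integral_exp_neg_half_mul_rpow_mul ha hz (lagWDivX n (2 * a)).hasDerivAt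
      (derivative (lagWDivX n (2 * a))).continuous,
    lagL_succ_sub_div_mul_lagL, rpow_add_one' hz (by linarith)]
  ring
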